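/- arXiv:1803.09610 — 6 statements merged into one kernel-verified Lean document; each statement's English description precedes it below -/
import Mathlib

section
/- Let P and Q be the linear differential operators acting on smooth functions y : ℝ² → ℝ by (P y)(x) = ∂₂∂₂∂₂ y(x) + x₂·y(x) and (Q y)(x) = ∂₂ y(x) + ∂₁ y(x). Then for every smooth function y : ℝ² → ℝ one has the operator identity Q(P y) − P(Q y) = y (i.e. QP − PQ = 1). -/
/-- Partial derivative with respect to the `i`-th coordinate of `ℝⁿ`. -/
noncomputable def pd {n : ℕ} (i : Fin n) (f : (Fin n → ℝ) → ℝ) : (Fin n → ℝ) → ℝ :=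
  fun x => fderiv ℝ f x (Pi.single i 1)

/-- The operator `P = d₂₂₂ + x²` acting on functions on `ℝ²`
(coordinates are `x 0` and `x 1`, so `x₂ = x 1` and `∂₂ = pd 1`). -/
noncomputable def Pop (f : (Fin 2 → ℝ) → ℝ) : (Fin 2 → ℝ) → ℝ :=
  fun x => pd 1 (pd 1 (pd 1 f)) x + x 1 * f x

/-- The operator `Q = d₂ + d₁` acting on functions on `ℝ²`. -/
noncomputable def Qop (f : (Fin 2 → ℝ) → ℝ) : (Fin 2 → ℝ) → ℝ :=
  fun x => pd 1 f x + pd 0 f x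

lemma pd_contDiff {n : ℕ} (i : Fin n) {f : (Fin n → ℝ) → ℝ}
    (hf : ContDiff ℝ (⊤ : ℕ∞) f) : ContDiff ℝ (⊤ : ℕ∞) (pd i f) :=
  (hf.fderiv_right (m := ((⊤:ℕ∞) : WithTop ℕ∞)) (by norm_cast)).clm_apply contDiff_const

lemma pd_add {n : ℕ} (i : Fin n) {f g : (Fin n → ℝ) → ℝ}
    (hf : Differentiable ℝ f) (hg : Differentiable ℝ g) (x : Fin n → ℝ) :
    pd i (fun x => f x + g x) x = pd i f x + pd i g x := by
  simp [pd, fderiv_fun_add (hf x) (hg x)]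

lemma pd_comm {f : (Fin 2 → ℝ) → ℝ} (hf : ContDiff ℝ (⊤ : ℕ∞) f) (i j : Fin 2)
    (x : Fin 2 → ℝ) : pd i (pd j f) x = pd j (pd i f) x := by
  have hsymm : IsSymmSndFDerivAt ℝ f x :=
    hf.contDiffAt.isSymmSndFDerivAt (n := (⊤ : ℕ∞)) (by rw [minSmoothness_of_isRCLikeNormedField]; norm_cast)
  have key : ∀ k l : Fin 2, pd k (pd l f) x
      = fderiv ℝ (fderiv ℝ f) x (Pi.single k 1) (Pi.single l 1) := by
    intro k l
    have hdiff : DifferentiableAt ℝ (fderiv ℝ f) x :=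
      ((hf.fderiv_right (m := ((1:ℕ∞) : WithTop ℕ∞)) (by norm_cast)).differentiable (by norm_cast)) x
    have hl : pd l f = fun y => (fderiv ℝ f y) (Pi.single l 1) := rfl
    simp only [pd, hl]
    rw [fderiv_clm_apply hdiff (differentiableAt_const _)]
    simp
  rw [key, key, hsymm]

lemma pd_mul_coord (i : Fin 2) {f : (Fin 2 → ℝ) → ℝ}
    (hf : Differentiable ℝ f) (x : Fin 2 → ℝ) :
    pd i (fun x => x 1 * f x) x = (Pi.single i (1:ℝ) : Fin 2 → ℝ) 1 * f x + x 1 * pd i f x := by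
  have h1 : DifferentiableAt ℝ (fun x : Fin 2 → ℝ => x 1) x :=
    (ContinuousLinearMap.proj 1 : (Fin 2 → ℝ) →L[ℝ] ℝ).differentiableAt
  have hfd : fderiv ℝ (fun x : Fin 2 → ℝ => x 1) x
      = (ContinuousLinearMap.proj 1 : (Fin 2 → ℝ) →L[ℝ] ℝ) :=
    (ContinuousLinearMap.proj 1 : (Fin 2 → ℝ) →L[ℝ] ℝ).fderiv
  simp only [pd]
  rw [fderiv_fun_mul h1 (hf x)]
  simp [hfd]
  ring

/-- The operator identity `QP − PQ = 1`: for every smooth `y : ℝ² → ℝ`,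
`Q(P y) − P(Q y) = y`. -/
theorem QP_sub_PQ_eq_one (y : (Fin 2 → ℝ) → ℝ) (hy : ContDiff ℝ (⊤ : ℕ∞) y) :
    ∀ x, Qop (Pop y) x - Pop (Qop y) x = y x := by
  intro x
  -- smoothness of iterated derivatives
  have hy1 : ContDiff ℝ (⊤ : ℕ∞) (pd 1 y) := pd_contDiff 1 hy
  have hy0 : ContDiff ℝ (⊤ : ℕ∞) (pd 0 y) := pd_contDiff 0 hy
  have hy11 : ContDiff ℝ (⊤ : ℕ∞) (pd 1 (pd 1 y)) := pd_contDiff 1 hy1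
  have hy111 : ContDiff ℝ (⊤ : ℕ∞) (pd 1 (pd 1 (pd 1 y))) := pd_contDiff 1 hy11
  have hy10 : ContDiff ℝ (⊤ : ℕ∞) (pd 1 (pd 0 y)) := pd_contDiff 1 hy0
  have hy110 : ContDiff ℝ (⊤ : ℕ∞) (pd 1 (pd 1 (pd 0 y))) := pd_contDiff 1 hy10
  have hm : ContDiff ℝ (⊤ : ℕ∞) (fun x : Fin 2 → ℝ => x 1 * y x) :=
    ((ContinuousLinearMap.proj 1 : (Fin 2 → ℝ) →L[ℝ] ℝ).contDiff).mul hy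
  -- Q(Py)
  have hPop : Pop y = fun x => pd 1 (pd 1 (pd 1 y)) x + x 1 * y x := rfl
  have hQP : ∀ i : Fin 2, pd i (Pop y) x
      = pd i (pd 1 (pd 1 (pd 1 y))) x + ((Pi.single i (1:ℝ) : Fin 2 → ℝ) 1 * y x + x 1 * pd i y x) := by
    intro i
    rw [hPop, pd_add i (hy111.differentiable (by norm_cast)) (hm.differentiable (by norm_cast)),
      pd_mul_coord i (hy.differentiable (by norm_cast))]
  -- expand pd's of Qop y
  have hQ1 : pd 1 (Qop y) = fun x => pd 1 (pd 1 y) x + pd 1 (pd 0 y) x := by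
    funext z
    exact pd_add 1 (hy1.differentiable (by norm_cast)) (hy0.differentiable (by norm_cast)) z
  have hQ2 : pd 1 (pd 1 (Qop y)) = fun x => pd 1 (pd 1 (pd 1 y)) x + pd 1 (pd 1 (pd 0 y)) x := by
    funext z
    rw [hQ1]
    exact pd_add 1 (hy11.differentiable (by norm_cast)) (hy10.differentiable (by norm_cast)) z
  have hQ3 : pd 1 (pd 1 (pd 1 (Qop y))) x
      = pd 1 (pd 1 (pd 1 (pd 1 y))) x + pd 1 (pd 1 (pd 1 (pd 0 y))) x := by
    rw [hQ2]
    exact pd_add 1 (hy111.differentiable (by norm_cast)) (hy110.differentiable (by norm_cast)) x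
  -- mixed partials commute: pd 0 (d1³ y) = d1³ (pd 0 y)
  have hcomm : pd 0 (pd 1 (pd 1 (pd 1 y))) x = pd 1 (pd 1 (pd 1 (pd 0 y))) x := by
    have c1 : pd 0 (pd 1 (pd 1 (pd 1 y))) x = pd 1 (pd 0 (pd 1 (pd 1 y))) x :=
      pd_comm hy11 0 1 x
    have c2 : pd 0 (pd 1 (pd 1 y)) = pd 1 (pd 0 (pd 1 y)) := by
      funext z; exact pd_comm hy1 0 1 z
    have c3 : pd 0 (pd 1 y) = pd 1 (pd 0 y) := by
      funext z; exact pd_comm hy 0 1 z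
    rw [c1, c2, c3]
  -- now expand everything
  show (pd 1 (Pop y) x + pd 0 (Pop y) x)
      - (pd 1 (pd 1 (pd 1 (Qop y))) x + x 1 * (pd 1 y x + pd 0 y x)) = y x
  rw [hQP 1, hQP 0, hQ3, hcomm]
  simp
  ring
end

section
/- Let l₁, l₂, g be strictly positive real numbers. The only pair of smooth functions λ¹, λ² : ℝ → ℝ satisfying the three ordinary differential equations (λ¹)''(t) + (λ²)''(t) = 0, l₁·(λ¹)''(t) + g·λ¹(t) = 0, and l₂·(λ²)''(t) + g·λ²(t) = 0 for all t ∈ ℝ is λ¹ = λ² = 0, if and only if l₁ ≠ l₂. (The double pendulum is controllable if and only if the two lengths are different.) -/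
lemma cos_second_deriv (ω : ℝ) :
    deriv (deriv (fun t => Real.cos (ω * t))) = fun t => -(ω^2) * Real.cos (ω * t) := by
  have hmul : ∀ t : ℝ, HasDerivAt (fun s : ℝ => ω * s) ω t := fun t => by
    simpa using (hasDerivAt_id t).const_mul ω
  have h1 : deriv (fun t => Real.cos (ω * t)) = fun t => -(ω * Real.sin (ω * t)) := by
    funext t
    rw [((hmul t).cos).deriv]; ring
  rw [h1]
  funext t
  have : HasDerivAt (fun t => -(ω * Real.sin (ω * t))) (-(ω * (Real.cos (ω * t) * ω))) t :=
    (((hmul t).sin).const_mul ω).neg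
  rw [this.deriv]; ring

/-- The double pendulum is controllable if and only if the two lengths are
different: the only pair of smooth functions `λ¹, λ²` with
`(λ¹)'' + (λ²)'' = 0`, `l₁(λ¹)'' + gλ¹ = 0` and `l₂(λ²)'' + gλ² = 0`
is `λ¹ = λ² = 0`, if and only if `l₁ ≠ l₂`. -/
theorem double_pendulum_controllable_iff (l₁ l₂ g : ℝ)
    (hl₁ : 0 < l₁) (hl₂ : 0 < l₂) (hg : 0 < g) :
    (∀ lam₁ lam₂ : ℝ → ℝ, ContDiff ℝ (⊤ : ℕ∞) lam₁ → ContDiff ℝ (⊤ : ℕ∞) lam₂ →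
      (∀ t, deriv (deriv lam₁) t + deriv (deriv lam₂) t = 0) →
      (∀ t, l₁ * deriv (deriv lam₁) t + g * lam₁ t = 0) →
      (∀ t, l₂ * deriv (deriv lam₂) t + g * lam₂ t = 0) →
      lam₁ = 0 ∧ lam₂ = 0) ↔ l₁ ≠ l₂ := by
  constructor
  · intro H
    rintro rfl
    set ω := Real.sqrt (g / l₁) with hω
    have hω2 : ω ^ 2 = g / l₁ := Real.sq_sqrt (by positivity)
    set c : ℝ → ℝ := fun t => Real.cos (ω * t) with hc
    have hcd : ContDiff ℝ (⊤ : ℕ∞) c :=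
      Real.contDiff_cos.comp (contDiff_const.mul contDiff_id)
    have hdd : deriv (deriv c) = fun t => -(ω^2) * Real.cos (ω * t) := cos_second_deriv ω
    have hddneg : deriv (deriv (-c)) = fun t => ω^2 * Real.cos (ω * t) := by
      have e1 : deriv (-c) = -deriv c := by funext t; exact deriv.neg
      rw [e1]
      funext t
      have : deriv (-(deriv c)) t = -(deriv (deriv c) t) := deriv.neg
      rw [this, hdd]; ring
    have := H c (-c) hcd hcd.neg
      (by intro t; rw [hdd, hddneg]; ring)
      (by intro t
          rw [hdd]
          simp only [hc]
          rw [hω2]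
          field_simp
          ring)
      (by intro t
          rw [hddneg]
          simp only [Pi.neg_apply, hc]
          rw [hω2]
          field_simp
          ring)
    have h0 : c 0 = 1 := by simp [hc]
    rw [this.1] at h0
    simp at h0
  · intro hne lam₁ lam₂ hc₁ hc₂ h1 h2 h3
    have hd2 : Differentiable ℝ lam₂ := hc₂.differentiable (by simp)
    have hd2' : Differentiable ℝ (deriv lam₂) :=
      ((contDiff_infty_iff_deriv.mp hc₂).2).differentiable (by simp)
    have hlam1 : lam₁ = fun t => -(l₁ / l₂) * lam₂ t := by
      funext t
      have e1 := h1 t; have e2 := h2 t; have e3 := h3 t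
      have hddl2 : deriv (deriv lam₂) t = -(g / l₂) * lam₂ t := by
        field_simp; linarith
      have : lam₁ t = (l₁ / g) * deriv (deriv lam₂) t := by
        have : deriv (deriv lam₁) t = -deriv (deriv lam₂) t := by linarith
        rw [this] at e2
        field_simp at e2 ⊢; linarith
      rw [this, hddl2]; field_simp
    have hdd1 : ∀ t, deriv (deriv lam₁) t = -(l₁ / l₂) * deriv (deriv lam₂) t := by
      intro t
      rw [hlam1]
      have e : deriv (fun t => -(l₁ / l₂) * lam₂ t) = fun t => -(l₁ / l₂) * deriv lam₂ t :=
        funext fun s => deriv_const_mul _ (hd2 s)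
      rw [e, deriv_const_mul _ (hd2' t)]
    have hf0 : ∀ t, deriv (deriv lam₂) t = 0 := by
      intro t
      have e1 := h1 t
      rw [hdd1 t] at e1
      have hco : -(l₁ / l₂) + 1 ≠ 0 := by
        intro h
        apply hne
        field_simp at h
        linarith
      have : (-(l₁ / l₂) + 1) * deriv (deriv lam₂) t = 0 := by ring_nf; ring_nf at e1; linarith
      exact (mul_eq_zero.mp this).resolve_left hco
    have hl2z : lam₂ = 0 := by
      funext t
      have e3 := h3 t
      rw [hf0 t] at e3
      simp at e3
      rcases e3 with h | h
      · exact absurd h hg.ne'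
      · exact h
    refine ⟨?_, hl2z⟩
    rw [hlam1, hl2z]
    funext t; simp
end

section
/- Let φ : ℝ → ℝ be smooth with φ'(x) ≠ 0 for all x, and let α, γ, ᾱ, γ̄ : ℝ → ℝ be smooth functions with α(x) ≠ 0 for all x, satisfying the transformation laws α(x) = ᾱ(φ(x))·φ'(x) (transformation of a 1-form) and γ(x)·φ'(x) = γ̄(φ(x))·φ'(x)² + φ''(x) (transformation of a Christoffel symbol). Then for all x ∈ ℝ, (α'(x) − α(x)·γ(x))/α(x)² = (ᾱ'(φ(x)) − ᾱ(φ(x))·γ̄(φ(x)))/ᾱ(φ(x))²; that is, (∂ₓα − αγ)/α² transforms like a scalar. -/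
/-- If `α` transforms like a `1`-form, `α(x) = ᾱ(φ(x))·φ'(x)`, and `γ`
transforms like a Christoffel symbol, `γ(x)·φ'(x) = γ̄(φ(x))·φ'(x)² + φ''(x)`,
then `(∂ₓα − αγ)/α²` transforms like a scalar. -/
theorem vessiot_invariant_is_scalar (φ α γ αb γb : ℝ → ℝ)
    (hφ : ContDiff ℝ (⊤ : ℕ∞) φ) (hα : ContDiff ℝ (⊤ : ℕ∞) α)
    (hγ : ContDiff ℝ (⊤ : ℕ∞) γ) (hαb : ContDiff ℝ (⊤ : ℕ∞) αb)
    (hγb : ContDiff ℝ (⊤ : ℕ∞) γb)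
    (hφ' : ∀ x, deriv φ x ≠ 0) (hα0 : ∀ x, α x ≠ 0)
    (htransf1 : ∀ x, α x = αb (φ x) * deriv φ x)
    (htransf2 : ∀ x, γ x * deriv φ x = γb (φ x) * (deriv φ x) ^ 2 + deriv (deriv φ) x) :
    ∀ x, (deriv α x - α x * γ x) / (α x) ^ 2
      = (deriv αb (φ x) - αb (φ x) * γb (φ x)) / (αb (φ x)) ^ 2 := by
  intro x
  have hφd : Differentiable ℝ φ := hφ.differentiable (by simp)
  have hφ'd : Differentiable ℝ (deriv φ) :=
    ((hφ.of_le (WithTop.coe_le_coe.mpr le_top)).iterate_deriv' 1 1).differentiable (by simp)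
  have hαbd : Differentiable ℝ αb := hαb.differentiable (by simp)
  -- derivative of α via the transformation law
  have hda : HasDerivAt α
      (deriv αb (φ x) * deriv φ x * deriv φ x + αb (φ x) * deriv (deriv φ) x) x := by
    have h1 : HasDerivAt (fun y => αb (φ y)) (deriv αb (φ x) * deriv φ x) x :=
      (hαbd (φ x)).hasDerivAt.comp x (hφd x).hasDerivAt
    have h2 : HasDerivAt (fun y => αb (φ y) * deriv φ y)
        (deriv αb (φ x) * deriv φ x * deriv φ x + αb (φ x) * deriv (deriv φ) x) x :=
      h1.mul (hφ'd x).hasDerivAt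
    exact h2.congr_of_eventuallyEq (by filter_upwards with y using (htransf1 y))
  have hda' := hda.deriv
  have hab0 : αb (φ x) ≠ 0 := by
    intro h
    apply hα0 x
    rw [htransf1 x, h, zero_mul]
  have h2 := htransf2 x
  have hdd : deriv (deriv φ) x = γ x * deriv φ x - γb (φ x) * (deriv φ x) ^ 2 := by
    linarith
  have hp := hφ' x
  rw [hda', htransf1 x, hdd]
  field_simp
  ring
end

section
/- A triple of smooth functions ξ¹, ξ², ξ³ : ℝ³ → ℝ satisfies the contact Lie equations Φ¹ ≡ ∂₂ξ¹ − x₃∂₂ξ² + x₃∂₁ξ¹ − x₃²∂₁ξ² − ξ³ = 0 and Φ² ≡ ∂₃ξ¹ − x₃∂₃ξ² = 0 if and only if there exists a smooth function φ : ℝ³ → ℝ such that ξ¹ = φ − x₃·∂₃φ, ξ² = −∂₃φ, and ξ³ = ∂₂φ + x₃·∂₁φ. Moreover such φ is unique and is given by φ = ξ¹ − x₃·ξ². -/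
lemma pd_smooth {i : Fin 3} {f : (Fin 3 → ℝ) → ℝ} (hf : ContDiff ℝ (⊤ : ℕ∞) f) :
    ContDiff ℝ (⊤ : ℕ∞) (pd i f) :=
  (hf.fderiv_right (by simp)).clm_apply contDiff_const

lemma pd_comb (i : Fin 3) {f g : (Fin 3 → ℝ) → ℝ} (hf : Differentiable ℝ f)
    (hg : Differentiable ℝ g) (x : Fin 3 → ℝ) :
    pd i (fun y => f y - y 2 * g y) x
      = pd i f x - (Pi.single i 1 : Fin 3 → ℝ) 2 * g x - x 2 * pd i g x := by
  have hc : HasFDerivAt (fun y : Fin 3 → ℝ => y 2)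
      (ContinuousLinearMap.proj 2 : (Fin 3 → ℝ) →L[ℝ] ℝ) x :=
    hasFDerivAt_apply 2 x
  have hmul := hc.mul (hg x).hasFDerivAt
  have h := (hf x).hasFDerivAt.sub hmul
  simp only [pd, h.fderiv]
  rw [show (fun y => f y - y 2 * g y) = f - (fun y => y 2) * g from rfl, h.fderiv]
  simp [ContinuousLinearMap.proj_apply]
  ring

lemma pd_neg (i : Fin 3) (g : (Fin 3 → ℝ) → ℝ) (x : Fin 3 → ℝ) :
    pd i (fun y => -g y) x = -pd i g x := by
  simp [pd, fderiv_neg]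

/-- A triple of smooth functions `(ξ1, ξ2, ξ3)` on `ℝ³` satisfies the contact
Lie equations `Φ¹ ≡ ∂₂ξ1 − x₃∂₂ξ2 + x₃∂₁ξ1 − x₃²∂₁ξ2 − ξ3 = 0` and
`Φ² ≡ ∂₃ξ1 − x₃∂₃ξ2 = 0` if and only if there is a smooth `φ` with
`ξ1 = φ − x₃∂₃φ`, `ξ2 = −∂₃φ`, `ξ3 = ∂₂φ + x₃∂₁φ`; moreover such a `φ`
is unique, given by `φ = ξ1 − x₃ξ2`. -/
theorem contact_parametrization (ξ1 ξ2 ξ3 : (Fin 3 → ℝ) → ℝ)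
    (h1 : ContDiff ℝ (⊤ : ℕ∞) ξ1) (h2 : ContDiff ℝ (⊤ : ℕ∞) ξ2)
    (h3 : ContDiff ℝ (⊤ : ℕ∞) ξ3) :
    ((∀ x, pd 1 ξ1 x - x 2 * pd 1 ξ2 x + x 2 * pd 0 ξ1 x
        - (x 2) ^ 2 * pd 0 ξ2 x - ξ3 x = 0) ∧
     (∀ x, pd 2 ξ1 x - x 2 * pd 2 ξ2 x = 0)
      ↔
     ∃ φ : (Fin 3 → ℝ) → ℝ, ContDiff ℝ (⊤ : ℕ∞) φ ∧
       (∀ x, ξ1 x = φ x - x 2 * pd 2 φ x) ∧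
       (∀ x, ξ2 x = -pd 2 φ x) ∧
       (∀ x, ξ3 x = pd 1 φ x + x 2 * pd 0 φ x)) ∧
    (∀ φ : (Fin 3 → ℝ) → ℝ, ContDiff ℝ (⊤ : ℕ∞) φ →
       (∀ x, ξ1 x = φ x - x 2 * pd 2 φ x) →
       (∀ x, ξ2 x = -pd 2 φ x) →
       (∀ x, ξ3 x = pd 1 φ x + x 2 * pd 0 φ x) →
       ∀ x, φ x = ξ1 x - x 2 * ξ2 x) := by
  constructor
  · constructor
    · rintro ⟨hΦ1, hΦ2⟩
      refine ⟨fun y => ξ1 y - y 2 * ξ2 y, ?_, ?_, ?_, ?_⟩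
      · exact h1.sub (((ContinuousLinearMap.proj (2 : Fin 3) :
          (Fin 3 → ℝ) →L[ℝ] ℝ).contDiff).mul h2)
      · intro x
        rw [pd_comb 2 (h1.differentiable (by simp)) (h2.differentiable (by simp)) x]
        simp only [Pi.single_eq_same]
        linear_combination x 2 * hΦ2 x
      · intro x
        rw [pd_comb 2 (h1.differentiable (by simp)) (h2.differentiable (by simp)) x]
        simp only [Pi.single_eq_same]
        linear_combination hΦ2 x
      · intro x
        rw [pd_comb 1 (h1.differentiable (by simp)) (h2.differentiable (by simp)) x,
            pd_comb 0 (h1.differentiable (by simp)) (h2.differentiable (by simp)) x]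
        have hs1 : (Pi.single (1 : Fin 3) 1 : Fin 3 → ℝ) 2 = 0 := by
          simp [Pi.single_apply]
        have hs0 : (Pi.single (0 : Fin 3) 1 : Fin 3 → ℝ) 2 = 0 := by
          simp [Pi.single_apply]
        rw [hs1, hs0]
        linear_combination -hΦ1 x
    · rintro ⟨φ, hφ, e1, e2, e3⟩
      have hp2 : ContDiff ℝ (⊤ : ℕ∞) (pd 2 φ) := pd_smooth hφ
      have hξ1 : ξ1 = fun y => φ y - y 2 * pd 2 φ y := funext e1
      have hξ2 : ξ2 = fun y => -pd 2 φ y := funext e2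
      have key : ∀ i x, pd i ξ1 x = pd i φ x - (Pi.single i 1 : Fin 3 → ℝ) 2 * pd 2 φ x
          - x 2 * pd i (pd 2 φ) x := by
        intro i x
        rw [hξ1, pd_comb i (hφ.differentiable (by simp)) (hp2.differentiable (by simp)) x]
      have key2 : ∀ i x, pd i ξ2 x = -pd i (pd 2 φ) x := by
        intro i x
        rw [hξ2, pd_neg i (pd 2 φ) x]
      constructor
      · intro x
        rw [key 1 x, key 0 x, key2 1 x, key2 0 x, e3 x]
        have hs1 : (Pi.single (1 : Fin 3) 1 : Fin 3 → ℝ) 2 = 0 := by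
          simp [Pi.single_apply]
        have hs0 : (Pi.single (0 : Fin 3) 1 : Fin 3 → ℝ) 2 = 0 := by
          simp [Pi.single_apply]
        rw [hs1, hs0]; ring
      · intro x
        rw [key 2 x, key2 2 x]
        simp only [Pi.single_eq_same]
        ring
  · intro φ hφ e1 e2 e3 x
    have := e1 x
    have h2x := e2 x
    rw [h2x]
    linarith [e1 x]
end

section
/- Let ω = (ω₁, ω₂, ω₃) be a triple of smooth functions on ℝ³ and λ : ℝ³ → ℝ smooth. Define μ¹ := ω₃∂₂λ − ω₂∂₃λ + 2(∂₂ω₃ − ∂₃ω₂)λ, μ² := ω₁∂₃λ − ω₃∂₁λ + 2(∂₃ω₁ − ∂₁ω₃)λ, μ³ := ω₂∂₁λ − ω₁∂₂λ + 2(∂₁ω₂ − ∂₂ω₁)λ. Then ω₁μ¹ + ω₂μ² + ω₃μ³ = 2·c·λ pointwise, where c := ω₁(∂₂ω₃ − ∂₃ω₂) + ω₂(∂₃ω₁ − ∂₁ω₃) + ω₃(∂₁ω₂ − ∂₂ω₁). In particular, if c is a nonzero constant, then μ¹ = μ² = μ³ = 0 implies λ = 0, i.e. the operator ad(D₁) is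 injective. -/
/- Coordinates on `ℝ³` are `x 0, x 1, x 2`, so `∂₁ = pd 0`, `∂₂ = pd 1`, `∂₃ = pd 2`. -/

/-- `μ¹ := ω₃∂₂λ − ω₂∂₃λ + 2(∂₂ω₃ − ∂₃ω₂)λ`. -/
noncomputable def mu1 (ω1 ω2 ω3 lam : (Fin 3 → ℝ) → ℝ) : (Fin 3 → ℝ) → ℝ :=
  fun x => ω3 x * pd 1 lam x - ω2 x * pd 2 lam x + 2 * (pd 1 ω3 x - pd 2 ω2 x) * lam x

/-- `μ² := ω₁∂₃λ − ω₃∂₁λ + 2(∂₃ω₁ − ∂₁ω₃)λ`. -/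
noncomputable def mu2 (ω1 ω2 ω3 lam : (Fin 3 → ℝ) → ℝ) : (Fin 3 → ℝ) → ℝ :=
  fun x => ω1 x * pd 2 lam x - ω3 x * pd 0 lam x + 2 * (pd 2 ω1 x - pd 0 ω3 x) * lam x

/-- `μ³ := ω₂∂₁λ − ω₁∂₂λ + 2(∂₁ω₂ − ∂₂ω₁)λ`. -/
noncomputable def mu3 (ω1 ω2 ω3 lam : (Fin 3 → ℝ) → ℝ) : (Fin 3 → ℝ) → ℝ :=
  fun x => ω2 x * pd 0 lam x - ω1 x * pd 1 lam x + 2 * (pd 0 ω2 x - pd 1 ω1 x) * lam x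

/-- `c := ω₁(∂₂ω₃ − ∂₃ω₂) + ω₂(∂₃ω₁ − ∂₁ω₃) + ω₃(∂₁ω₂ − ∂₂ω₁)`
(the Vessiot structure function `ω · curl ω`). -/
noncomputable def vessiot (ω1 ω2 ω3 : (Fin 3 → ℝ) → ℝ) : (Fin 3 → ℝ) → ℝ :=
  fun x => ω1 x * (pd 1 ω3 x - pd 2 ω2 x) + ω2 x * (pd 2 ω1 x - pd 0 ω3 x)
    + ω3 x * (pd 0 ω2 x - pd 1 ω1 x)

/-- `ω₁μ¹ + ω₂μ² + ω₃μ³ = 2cλ` pointwise; in particular, if `c` is a nonzero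
constant then `μ¹ = μ² = μ³ = 0` implies `λ = 0`, i.e. `ad(D₁)` is injective. -/
theorem omega_dot_mu_eq_two_c_lam (ω1 ω2 ω3 lam : (Fin 3 → ℝ) → ℝ)
    (hω1 : ContDiff ℝ (⊤ : ℕ∞) ω1) (hω2 : ContDiff ℝ (⊤ : ℕ∞) ω2)
    (hω3 : ContDiff ℝ (⊤ : ℕ∞) ω3) (hlam : ContDiff ℝ (⊤ : ℕ∞) lam) :
    (∀ x, ω1 x * mu1 ω1 ω2 ω3 lam x + ω2 x * mu2 ω1 ω2 ω3 lam x
        + ω3 x * mu3 ω1 ω2 ω3 lam x = 2 * vessiot ω1 ω2 ω3 x * lam x) ∧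
    (∀ c : ℝ, c ≠ 0 → (∀ x, vessiot ω1 ω2 ω3 x = c) →
      (∀ x, mu1 ω1 ω2 ω3 lam x = 0 ∧ mu2 ω1 ω2 ω3 lam x = 0 ∧ mu3 ω1 ω2 ω3 lam x = 0) →
      ∀ x, lam x = 0) := by
  have key : ∀ x, ω1 x * mu1 ω1 ω2 ω3 lam x + ω2 x * mu2 ω1 ω2 ω3 lam x
      + ω3 x * mu3 ω1 ω2 ω3 lam x = 2 * vessiot ω1 ω2 ω3 x * lam x := by
    intro x
    simp only [mu1, mu2, mu3, vessiot]
    ring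
  refine ⟨key, fun c hc hvc hmu x => ?_⟩
  have h := key x
  obtain ⟨h1, h2, h3⟩ := hmu x
  rw [h1, h2, h3, hvc x] at h
  have : 2 * c * lam x = 0 := by linarith
  rcases mul_eq_zero.1 this with h' | h'
  · exact absurd h' (by positivity)
  · exact h'
end

section
/- Let n ≥ 3. Suppose C : Fin n → Fin n → Fin n → Fin n → ℝ, written C^k_{i l m} (one upper index k and three lower indices i, l, m), is totally symmetric in its three lower indices, and satisfies for all i, j, l, m the conformal Killing symbol relations C^j_{i l m} + C^i_{j l m} − (2/n)·δ_{ij}·Σ_r C^r_{r l m} = 0 (where δ_{ij} is the Kronecker delta). Then C = 0. That is, the third prolongation ĝ₃ of the conformal Killing symbol ĝ₁ for the Euclidean metric vanishes in every dimension n ≥ 3. -/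
private lemma exists_third_index (n : ℕ) (hn : 3 ≤ n) (j m : Fin n) :
    ∃ i : Fin n, i ≠ j ∧ i ≠ m := by
  by_contra h
  push_neg at h
  have hsub : (Finset.univ : Finset (Fin n)) ⊆ {j, m} := by
    intro i _
    simp only [Finset.mem_insert, Finset.mem_singleton]
    by_cases hij : i = j
    · exact Or.inl hij
    · exact Or.inr (h i hij)
  have hcard := Finset.card_le_card hsub
  have h2 : ({j, m} : Finset (Fin n)).card ≤ 2 :=
    le_trans (Finset.card_insert_le _ _) (by simp)
  simp [Finset.card_univ] at hcard
  omega

/-- Vanishing of the third prolongation of the conformal Killing symbol: for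
`n ≥ 3`, if `C^k_{ilm}` is totally symmetric in its three lower indices and
satisfies `C^j_{ilm} + C^i_{jlm} − (2/n)·δ_{ij}·Σ_r C^r_{rlm} = 0` for all
indices, then `C = 0`. -/
theorem conformal_killing_g3_eq_zero (n : ℕ) (hn : 3 ≤ n)
    (C : Fin n → Fin n → Fin n → Fin n → ℝ)
    (hsym1 : ∀ k i l m, C k i l m = C k l i m)
    (hsym2 : ∀ k i l m, C k i l m = C k i m l)
    (hg1 : ∀ i j l m, C j i l m + C i j l m
      - (2 / (n : ℝ)) * (if i = j then (1 : ℝ) else 0) * (∑ r, C r r l m) = 0) :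
    ∀ k i l m, C k i l m = 0 := by
  have hnpos : (0 : ℝ) < (n : ℝ) := by
    have : 0 < n := by omega
    exact_mod_cast this
  -- swap first and third lower indices
  have hswap13 : ∀ k i l m, C k i l m = C k m l i := by
    intro k i l m
    rw [hsym2 k i l m, hsym1 k i m l, hsym2 k m i l]
  -- key identity: 2 C^j_{ilm} = (2/n)(δ_{ij} T_{lm} - δ_{il} T_{jm} + δ_{lj} T_{im})
  have key : ∀ j i l m,
      2 * C j i l m =
        (2 / (n : ℝ)) * (if i = j then (1 : ℝ) else 0) * (∑ r, C r r l m)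
        - (2 / (n : ℝ)) * (if i = l then (1 : ℝ) else 0) * (∑ r, C r r j m)
        + (2 / (n : ℝ)) * (if l = j then (1 : ℝ) else 0) * (∑ r, C r r i m) := by
    intro j i l m
    have h1 := hg1 i j l m
    have h2 := hg1 i l j m
    have h3 := hg1 l j i m
    have s1 : C i j l m = C i l j m := hsym1 i j l m
    have s2 : C l i j m = C l j i m := hsym1 l i j m
    have s3 : C j l i m = C j i l m := hsym1 j l i m
    linarith
  -- off-diagonal trace vanishes
  have Toff : ∀ j m : Fin n, j ≠ m → (∑ r, C r r j m) = 0 := by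
    intro j m hjm
    obtain ⟨i, hij, him⟩ := exists_third_index n hn j m
    have e1 := key j i i m
    have e2 := key j m i i
    have hC : C j i i m = C j m i i := hswap13 j i i m
    rw [if_neg hij, if_pos rfl] at e1
    have hmj : m ≠ j := fun h => hjm h.symm
    have hmi : m ≠ i := fun h => him h.symm
    rw [if_neg hmj, if_neg hmi, if_neg hij] at e2
    have h2n : (2 / (n : ℝ)) ≠ 0 := by positivity
    have : (2 / (n : ℝ)) * (∑ r, C r r j m) = 0 := by
      rw [hC] at e1
      linarith
    exact (mul_eq_zero.mp this).resolve_left h2n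
  -- diagonal traces: T(i,i) = -T(j,j) for i ≠ j
  have Tanti : ∀ i j : Fin n, i ≠ j →
      (∑ r, C r r i i) = -(∑ r, C r r j j) := by
    intro i j hij
    have e1 := key j i i j
    have e2 := key j j i i
    have hC : C j i i j = C j j i i := hswap13 j i i j
    rw [if_neg hij, if_pos rfl] at e1
    have hji : j ≠ i := fun h => hij h.symm
    rw [if_pos rfl, if_neg hji, if_neg hij] at e2
    have h2n : (2 / (n : ℝ)) ≠ 0 := by positivity
    have h0 : (2 / (n : ℝ)) * ((∑ r, C r r i i) + (∑ r, C r r j j)) = 0 := by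
      rw [hC] at e1
      ring_nf
      ring_nf at e1 e2
      linarith
    have := (mul_eq_zero.mp h0).resolve_left h2n
    linarith
  -- hence all diagonal traces vanish
  have Tdiag : ∀ j : Fin n, (∑ r, C r r j j) = 0 := by
    intro j
    obtain ⟨a, haj, -⟩ := exists_third_index n hn j j
    obtain ⟨b, hbj, hba⟩ := exists_third_index n hn j a
    have h1 := Tanti a j haj
    have h2 := Tanti b j hbj
    have h3 := Tanti a b (fun h => hba h.symm)
    linarith
  have Tzero : ∀ l m : Fin n, (∑ r, C r r l m) = 0 := by
    intro l m
    by_cases h : l = m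
    · subst h; exact Tdiag l
    · exact Toff l m h
  intro k i l m
  have e := key k i l m
  rw [Tzero, Tzero, Tzero] at e
  have h2 : 2 * C k i l m = 0 := by
    rw [e]; ring
  linarith
end
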